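/- For every n ≥ 4, both C_n and D_n contain exactly 3·2^{n-4} - 1 occurrences of the factor (contiguous subword) 221. -/

import Mathlib

/-- The pair `(C_n, D_n)` of sigma-words, with `C_0 = D_0 = []`,
`C_{k+1} = C_k · 1 · D_k`, `D_{k+1} = C_k · 2 · D_k`
(so `C_1 = [1]`, `D_1 = [2]`). -/
def sigmaCD : ℕ → List ℕ × List ℕ
  | 0 => ([], [])
  | k + 1 => ((sigmaCD k).1 ++ 1 :: (sigmaCD k).2, (sigmaCD k).1 ++ 2 :: (sigmaCD k).2)

/-- The sigma-word `C_n`. -/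
def sigmaC (n : ℕ) : List ℕ := (sigmaCD n).1

/-- The sigma-word `D_n`. -/
def sigmaD (n : ℕ) : List ℕ := (sigmaCD n).2

/-- Number of occurrences of `p` as a (not necessarily contiguous) subsequence of `w`,
counted with multiplicity of position sets. -/
def subseqCount (p w : List ℕ) : ℕ := (w.sublistsLen p.length).count p

/-- Number of occurrences of `p` as a factor (contiguous subword) of `w`,
i.e. the number of starting positions at which `p` occurs in `w`. -/
def factorCount (p w : List ℕ) : ℕ :=
  (List.range w.length).countP fun i => decide ((w.drop i).take p.length = p)

/-! For `n ≥ 3` both `C_n` and `D_n` begin with `11` and end with `22`. Hence in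
`C_{n+1} = C_n · a · D_n` (with `a ∈ {1, 2}`) the only occurrence of `221` straddling the
middle letter is `22·1` resp. `2·2·1`, so both counts satisfy `x_{n+1} = 2 x_n + 1`; starting from
`x_4 = 2` this gives `x_n = 3·2^{n-4} - 1`. -/

open List

theorem factorCount_cons (p : List ℕ) (x : ℕ) (w : List ℕ) :
    factorCount p (x :: w) =
      factorCount p w + if (x :: w).take p.length = p then 1 else 0 := by
  simp only [factorCount, length_cons, range_succ_eq_map, countP_cons, countP_map]
  congr 1
  simp

theorem factorCount_eq_zero_of_length_lt {p w : List ℕ} (hw : w.length < p.length) :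
    factorCount p w = 0 := by
  refine countP_eq_zero.2 fun i _ h => ?_
  have := congrArg length (of_decide_eq_true h)
  simp only [length_take, length_drop] at this
  omega

/-- When `w` is one letter shorter than `p`, an occurrence of `p` in `u ++ w ++ v` starting in `u`
lies inside `u ++ w`, and `w` itself contains none. -/
theorem factorCount_append_append {p w : List ℕ} (hw : w.length + 1 = p.length) (u v : List ℕ) :
    factorCount p (u ++ w ++ v) = factorCount p (u ++ w) + factorCount p (w ++ v) := by
  induction u with
  | nil => simp [factorCount_eq_zero_of_length_lt (p := p) (w := w) (by omega)]
  | cons x u ih =>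
    have hlen : p.length ≤ (x :: (u ++ w)).length := by simp; omega
    rw [cons_append, cons_append, factorCount_cons, factorCount_cons, ih,
      ← cons_append, take_append_of_le_length hlen]
    omega

theorem sigmaC_succ (n : ℕ) : sigmaC (n + 1) = sigmaC n ++ 1 :: sigmaD n := rfl

theorem sigmaD_succ (n : ℕ) : sigmaD (n + 1) = sigmaC n ++ 2 :: sigmaD n := rfl

theorem prefix_sigmaC {n : ℕ} (hn : 3 ≤ n) : [1, 1] <+: sigmaC n := by
  induction n, hn using Nat.le_induction with
  | base => decide
  | succ n _ ih => exact ih.trans (prefix_append _ _)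

theorem suffix_sigmaD {n : ℕ} (hn : 3 ≤ n) : [2, 2] <:+ sigmaD n := by
  induction n, hn using Nat.le_induction with
  | base => decide
  | succ n _ ih =>
    rw [sigmaD_succ]
    exact ih.trans ((suffix_cons _ _).trans (suffix_append _ _))

theorem prefix_sigmaD {n : ℕ} (hn : 3 ≤ n) : [1, 1] <+: sigmaD n := by
  obtain rfl | hn := hn.eq_or_lt
  · decide
  · obtain ⟨n, rfl⟩ := Nat.exists_eq_add_of_lt hn
    exact (prefix_sigmaC (by omega)).trans (prefix_append _ _)

theorem suffix_sigmaC {n : ℕ} (hn : 3 ≤ n) : [2, 2] <:+ sigmaC n := by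
  obtain rfl | hn := hn.eq_or_lt
  · decide
  · obtain ⟨n, rfl⟩ := Nat.exists_eq_add_of_lt hn
    rw [sigmaC_succ]
    exact (suffix_sigmaD (by omega)).trans ((suffix_cons _ _).trans (suffix_append _ _))

theorem factorCount_221_sigmaC_append_cons_sigmaD {n : ℕ} (hn : 3 ≤ n) {a : ℕ}
    (ha : a = 1 ∨ a = 2) :
    factorCount [2, 2, 1] (sigmaC n ++ a :: sigmaD n) =
      factorCount [2, 2, 1] (sigmaC n) + factorCount [2, 2, 1] (sigmaD n) + 1 := by
  obtain ⟨u, hu⟩ := suffix_sigmaC hn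
  obtain ⟨v, hv⟩ := prefix_sigmaD hn
  have hmiddle : factorCount [2, 2, 1] ([2, 2, a] ++ [1, 1]) = 1 := by
    rcases ha with rfl | rfl <;> decide
  rw [← hu, ← hv, factorCount_append_append rfl u,
    show [2, 2] ++ a :: ([1, 1] ++ v) = [2, 2, a] ++ [1, 1] ++ v by simp,
    factorCount_append_append rfl, hmiddle]
  omega

theorem factorCount_221_sigma_add_four (m : ℕ) :
    factorCount [2, 2, 1] (sigmaC (m + 4)) = 3 * 2 ^ m - 1 ∧
      factorCount [2, 2, 1] (sigmaD (m + 4)) = 3 * 2 ^ m - 1 := by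
  induction m with
  | zero => decide
  | succ m ih =>
    rw [show m + 1 + 4 = m + 4 + 1 by omega, sigmaC_succ (m + 4), sigmaD_succ (m + 4),
      factorCount_221_sigmaC_append_cons_sigmaD (by omega) (.inl rfl),
      factorCount_221_sigmaC_append_cons_sigmaD (by omega) (.inr rfl), ih.1, ih.2, pow_succ]
    have := Nat.one_le_two_pow (n := m)
    omega

theorem factor_221 (n : ℕ) (hn : 4 ≤ n) :
    factorCount [2, 2, 1] (sigmaC n) = 3 * 2 ^ (n - 4) - 1 ∧
    factorCount [2, 2, 1] (sigmaD n) = 3 * 2 ^ (n - 4) - 1 := by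
  obtain ⟨m, rfl⟩ := Nat.exists_eq_add_of_le' hn
  simpa using factorCount_221_sigma_add_four m
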